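/- Let n ≥ 2 and let v : ℝⁿ → ℝ be a positive C² function satisfying the Allen-Cahn equation Δv + v - v³ = 0 on all of ℝⁿ, where Δ is the standard Euclidean Laplacian. Then v ≡ 1. -/

import Mathlib

/-!
Compare `v` on a cube of half-side `h` centred at `z` with two explicit barriers.

From above: each summand `√2 / (h - s)` of `ψ = 1 + ∑ᵢ (√2 / (h - sᵢ) + √2 / (h + sᵢ))`,
`sᵢ = xᵢ - zᵢ`, solves `u'' = u³`, so `Δψ ≤ ψ³ - ψ`, and `ψ` blows up on the boundary. At an
interior maximum of `v - ψ` the maximum principle gives `v³ - v ≤ ψ³ - ψ`, hence `v ≤ ψ` there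
and so on the whole cube; in particular `v z ≤ ψ z = 1 + 2√2 n / h`, and `h → ∞` gives `v ≤ 1`.

From below: `φ = ∏ᵢ cos (a sᵢ)` with `a h = π / 2` vanishes on the boundary and satisfies
`Δφ = -n a² φ`. At an interior maximum `x₀` of `φ / v`, with value `T`, `φ - T v` has a local
maximum, so `-n a² T v ≤ T (v³ - v)` there, i.e. `v(x₀)² ≥ 1 - n a²`; and `v(x₀) ≤ v(z)`
because `φ ≤ 1 = φ(z)`. Letting `a → 0` gives `v ≥ 1`.
-/

open Real

/-- The standard Euclidean Laplacian `Δ v = ∑ᵢ ∂²v/∂xᵢ²` on `ℝⁿ`. -/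
noncomputable def euclLaplacian {n : ℕ} (v : EuclideanSpace ℝ (Fin n) → ℝ)
    (x : EuclideanSpace ℝ (Fin n)) : ℝ :=
  ∑ i : Fin n,
    fderiv ℝ (fun y => fderiv ℝ v y (EuclideanSpace.single i 1)) x
      (EuclideanSpace.single i 1)

open Filter Topology

theorem Finset.sum_pow_le_pow_sum {ι R : Type*} [CommSemiring R] [PartialOrder R]
    [IsOrderedRing R] (s : Finset ι) {f : ι → R} (hf : ∀ i ∈ s, 0 ≤ f i) {m : ℕ} (hm : m ≠ 0) :
    ∑ i ∈ s, f i ^ m ≤ (∑ i ∈ s, f i) ^ m := by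
  induction s using Finset.cons_induction with
  | empty => simp [zero_pow hm]
  | cons a s ha ih =>
    rw [Finset.sum_cons, Finset.sum_cons]
    have hs := (Finset.forall_mem_cons ha _).1 hf
    calc f a ^ m + ∑ i ∈ s, f i ^ m ≤ f a ^ m + (∑ i ∈ s, f i) ^ m := by gcongr; exact ih hs.2
      _ ≤ (f a + ∑ i ∈ s, f i) ^ m := pow_add_pow_le hs.1 (Finset.sum_nonneg hs.2) hm

section SecondDerivative

theorem IsLocalMax.iteratedDeriv_two_nonpos {g : ℝ → ℝ} {t : ℝ} (h : IsLocalMax g t)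
    (hc : ContinuousAt g t) : iteratedDeriv 2 g t ≤ 0 := by
  rw [iteratedDeriv_succ, iteratedDeriv_one]
  by_contra! hpos
  -- a positive second derivative would make `t` also a local minimum, so `g` locally constant
  have hmin := isLocalMin_of_deriv_deriv_pos hpos h.deriv_eq_zero hc
  have hconst : g =ᶠ[𝓝 t] fun _ => g t := by
    filter_upwards [h, hmin] with s h₁ h₂ using le_antisymm h₁ h₂
  rw [hconst.deriv.deriv_eq] at hpos
  simp at hpos

variable {E : Type*} [NormedAddCommGroup E] [NormedSpace ℝ E] {f : E → ℝ} {x : E}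

theorem ContDiffAt.comp_line (hf : ContDiffAt ℝ 2 f x) (w : E) :
    ContDiffAt ℝ 2 (fun t : ℝ => f (x + t • w)) 0 := by
  rw [show x = x + (0 : ℝ) • w by simp] at hf
  exact hf.comp (0 : ℝ) (by fun_prop)

theorem ContDiffAt.iteratedDeriv_two_comp_line (hf : ContDiffAt ℝ 2 f x) (w : E) :
    iteratedDeriv 2 (fun t : ℝ => f (x + t • w)) 0 = fderiv ℝ (fun y => fderiv ℝ f y w) x w := by
  have hline : ∀ t : ℝ, HasDerivAt (fun t : ℝ => x + t • w) w t := fun t => by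
    simpa using ((hasDerivAt_id t).smul_const w).const_add x
  have hdiff : ∀ᶠ y in 𝓝 x, DifferentiableAt ℝ f y :=
    (hf.eventually (by simp)).mono fun y hy => hy.differentiableAt (by simp)
  have hd2 : DifferentiableAt ℝ (fun y => fderiv ℝ f y w) x :=
    ((hf.fderiv_right (m := 1) le_rfl).differentiableAt (by simp)).clm_apply
      (differentiableAt_const w)
  have hcont : Tendsto (fun t : ℝ => x + t • w) (𝓝 0) (𝓝 x) := by
    simpa using (hline 0).continuousAt.tendsto
  have hderiv : deriv (fun t : ℝ => f (x + t • w)) =ᶠ[𝓝 0] fun t => fderiv ℝ f (x + t • w) w :=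
    (hcont.eventually hdiff).mono fun t ht => (ht.hasFDerivAt.comp_hasDerivAt t (hline t)).deriv
  rw [iteratedDeriv_succ, iteratedDeriv_one, hderiv.deriv_eq]
  exact (hd2.hasFDerivAt.comp_hasDerivAt_of_eq 0 (hline 0) (by simp)).deriv

end SecondDerivative

section Laplacian

variable {n : ℕ}

theorem EuclideanSpace.add_smul_single_apply {ι : Type*} [DecidableEq ι]
    (x : EuclideanSpace ℝ ι) (t : ℝ) (i j : ι) :
    (x + t • EuclideanSpace.single i (1 : ℝ) : EuclideanSpace ℝ ι) j =
      Function.update (⇑x) i (x i + t) j := by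
  rcases eq_or_ne j i with rfl | hji <;> simp [*]

theorem euclLaplacian_eq_sum_iteratedDeriv {f : EuclideanSpace ℝ (Fin n) → ℝ}
    {x : EuclideanSpace ℝ (Fin n)} (hf : ContDiffAt ℝ 2 f x) :
    euclLaplacian f x =
      ∑ i, iteratedDeriv 2 (fun t : ℝ => f (x + t • EuclideanSpace.single i 1)) 0 := by
  simp only [euclLaplacian, hf.iteratedDeriv_two_comp_line]

theorem euclLaplacian_le_of_isLocalMax_sub {f g : EuclideanSpace ℝ (Fin n) → ℝ}
    {x : EuclideanSpace ℝ (Fin n)} (hf : ContDiffAt ℝ 2 f x) (hg : ContDiffAt ℝ 2 g x)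
    (hmax : IsLocalMax (fun y => f y - g y) x) : euclLaplacian f x ≤ euclLaplacian g x := by
  rw [euclLaplacian_eq_sum_iteratedDeriv hf, euclLaplacian_eq_sum_iteratedDeriv hg]
  refine Finset.sum_le_sum fun i _ => sub_nonpos.1 ?_
  have hf' := hf.comp_line (EuclideanSpace.single i 1)
  have hg' := hg.comp_line (EuclideanSpace.single i 1)
  have hline : IsLocalMax (fun t : ℝ => f (x + t • EuclideanSpace.single i 1)
      - g (x + t • EuclideanSpace.single i 1)) 0 :=
    IsLocalMax.comp_continuous (f := fun y => f y - g y) (by simpa using hmax)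
      (by fun_prop : ContinuousAt (fun t : ℝ => x + t • EuclideanSpace.single i 1) 0)
  rw [← iteratedDeriv_fun_sub hf' hg']
  exact hline.iteratedDeriv_two_nonpos (hf'.continuousAt.sub hg'.continuousAt)

theorem euclLaplacian_const_add (f : EuclideanSpace ℝ (Fin n) → ℝ) (c : ℝ) :
    euclLaplacian (fun y => c + f y) = euclLaplacian f := by
  funext x
  simp only [euclLaplacian, fderiv_const_add]

theorem euclLaplacian_const_mul {f : EuclideanSpace ℝ (Fin n) → ℝ}
    {x : EuclideanSpace ℝ (Fin n)} (hf : ContDiffAt ℝ 2 f x) (c : ℝ) :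
    euclLaplacian (fun y => c * f y) x = c * euclLaplacian f x := by
  rw [euclLaplacian_eq_sum_iteratedDeriv (contDiffAt_const.mul hf),
    euclLaplacian_eq_sum_iteratedDeriv hf, Finset.mul_sum]
  simp only [iteratedDeriv_const_mul_field]

theorem contDiffAt_sum_comp_apply {ι : Type*} [Fintype ι] {G : ι → ℝ → ℝ}
    {x : EuclideanSpace ℝ ι} (hG : ∀ i, ContDiffAt ℝ 2 (G i) (x i)) :
    ContDiffAt ℝ 2 (fun y : EuclideanSpace ℝ ι => ∑ i, G i (y i)) x :=
  ContDiffAt.sum fun i _ => (hG i).comp x (contDiff_piLp_apply 2).contDiffAt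

theorem contDiffAt_prod_comp_apply {ι : Type*} [Fintype ι] {G : ι → ℝ → ℝ}
    {x : EuclideanSpace ℝ ι} (hG : ∀ i, ContDiffAt ℝ 2 (G i) (x i)) :
    ContDiffAt ℝ 2 (fun y : EuclideanSpace ℝ ι => ∏ i, G i (y i)) x :=
  contDiffAt_prod fun i _ => (hG i).comp x (contDiff_piLp_apply 2).contDiffAt

theorem euclLaplacian_sum_comp_apply {G : Fin n → ℝ → ℝ} {x : EuclideanSpace ℝ (Fin n)}
    (hG : ∀ i, ContDiffAt ℝ 2 (G i) (x i)) :
    euclLaplacian (fun y => ∑ i, G i (y i)) x = ∑ i, iteratedDeriv 2 (G i) (x i) := by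
  rw [euclLaplacian_eq_sum_iteratedDeriv (contDiffAt_sum_comp_apply hG)]
  refine Finset.sum_congr rfl fun i _ => ?_
  simp only [EuclideanSpace.add_smul_single_apply, Function.apply_update (fun j => G j),
    Finset.sum_update_of_mem (Finset.mem_univ i)]
  simp only [add_comm (G i _), iteratedDeriv_const_add two_pos, iteratedDeriv_comp_const_add,
    add_zero]

theorem euclLaplacian_prod_comp_apply {G : Fin n → ℝ → ℝ} {x : EuclideanSpace ℝ (Fin n)}
    (hG : ∀ i, ContDiffAt ℝ 2 (G i) (x i)) :
    euclLaplacian (fun y => ∏ i, G i (y i)) x =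
      ∑ i, iteratedDeriv 2 (G i) (x i) * ∏ j ∈ Finset.univ \ {i}, G j (x j) := by
  rw [euclLaplacian_eq_sum_iteratedDeriv (contDiffAt_prod_comp_apply hG)]
  refine Finset.sum_congr rfl fun i _ => ?_
  simp only [EuclideanSpace.add_smul_single_apply, Function.apply_update (fun j => G j),
    Finset.prod_update_of_mem (Finset.mem_univ i)]
  simp only [iteratedDeriv_mul_const_field, iteratedDeriv_comp_const_add, add_zero]

end Laplacian

section Cubes

variable {ι : Type*}

def closedCube (z : EuclideanSpace ℝ ι) (r : ℝ) : Set (EuclideanSpace ℝ ι) :=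
  {x | ∀ i, |x i - z i| ≤ r}

def openCube (z : EuclideanSpace ℝ ι) (r : ℝ) : Set (EuclideanSpace ℝ ι) :=
  {x | ∀ i, |x i - z i| < r}

theorem isCompact_closedCube [Fintype ι] (z : EuclideanSpace ℝ ι) (r : ℝ) :
    IsCompact (closedCube z r) := by
  have : closedCube z r = WithLp.ofLp ⁻¹' Set.Icc (fun i => z i - r) (fun i => z i + r) := by
    ext x
    simp only [closedCube, Set.mem_ofPred_eq, Set.mem_preimage, Set.mem_Icc, Pi.le_def,
      ← forall_and, abs_sub_le_iff]
    exact forall_congr' fun i => by constructor <;> rintro ⟨h₁, h₂⟩ <;> constructor <;> linarith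
  rw [this]
  exact (PiLp.homeomorph 2 _).isCompact_preimage.2 isCompact_Icc

theorem isOpen_openCube [Finite ι] (z : EuclideanSpace ℝ ι) (r : ℝ) : IsOpen (openCube z r) := by
  simp only [openCube, Set.ofPred_forall]
  exact isOpen_iInter_of_finite fun i => isOpen_lt (by fun_prop) continuous_const

theorem openCube_subset_closedCube (z : EuclideanSpace ℝ ι) (r : ℝ) :
    openCube z r ⊆ closedCube z r :=
  fun _ hx i => (hx i).le

theorem closedCube_subset_openCube (z : EuclideanSpace ℝ ι) {r r' : ℝ} (hr : r < r') :
    closedCube z r ⊆ openCube z r' :=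
  fun _ hx i => (hx i).trans_lt hr

theorem self_mem_openCube (z : EuclideanSpace ℝ ι) {r : ℝ} (hr : 0 < r) : z ∈ openCube z r :=
  fun i => by simpa using hr

theorem self_mem_closedCube (z : EuclideanSpace ℝ ι) {r : ℝ} (hr : 0 ≤ r) :
    z ∈ closedCube z r :=
  fun i => by simpa using hr

end Cubes

section UpperBarrier

noncomputable def blowUpProfile (h s : ℝ) : ℝ := √2 / (h - s)

noncomputable def blowUpPair (h s : ℝ) : ℝ := blowUpProfile h s + blowUpProfile h (-s)

theorem blowUpProfile_pos {h s : ℝ} (hs : s < h) : 0 < blowUpProfile h s :=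
  div_pos (by positivity) (sub_pos.2 hs)

theorem contDiffAt_blowUpProfile {h s : ℝ} (hs : s < h) : ContDiffAt ℝ 2 (blowUpProfile h) s :=
  contDiffAt_const.div (contDiffAt_const.sub contDiffAt_id) (sub_pos.2 hs).ne'

theorem iteratedDeriv_two_blowUpProfile {h s : ℝ} (hs : s < h) :
    iteratedDeriv 2 (blowUpProfile h) s = blowUpProfile h s ^ 3 := by
  have hderiv : ∀ r < h, HasDerivAt (blowUpProfile h) (√2 / (h - r) ^ 2) r := fun r hr =>
    ((hasDerivAt_const r √2).div ((hasDerivAt_id' r).const_sub h) (sub_pos.2 hr).ne').congr_deriv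
      (by ring)
  have hderiv2 : HasDerivAt (fun r => √2 / (h - r) ^ 2) (2 * √2 / (h - s) ^ 3) s := by
    have hne : h - s ≠ 0 := (sub_pos.2 hs).ne'
    refine ((hasDerivAt_const s √2).div (((hasDerivAt_id' s).const_sub h).pow 2)
      (pow_ne_zero 2 hne)).congr_deriv ?_
    simp only [Pi.pow_apply]
    field_simp
    ring
  have heq : deriv (blowUpProfile h) =ᶠ[𝓝 s] fun r => √2 / (h - r) ^ 2 :=
    (eventually_lt_nhds hs).mono fun r hr => (hderiv r hr).deriv
  rw [iteratedDeriv_succ, iteratedDeriv_one, heq.deriv_eq, hderiv2.deriv, blowUpProfile, div_pow,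
    show √2 ^ 3 = 2 * √2 by rw [pow_succ, sq_sqrt zero_le_two]]

theorem blowUpPair_pos {h s : ℝ} (hs : |s| < h) : 0 < blowUpPair h s :=
  add_pos (blowUpProfile_pos (abs_lt.1 hs).2) (blowUpProfile_pos (neg_lt.1 (abs_lt.1 hs).1))

theorem blowUpPair_zero (h : ℝ) : blowUpPair h 0 = 2 * √2 / h := by
  simp only [blowUpPair, blowUpProfile, neg_zero, sub_zero]
  ring

theorem contDiffAt_blowUpPair {h s : ℝ} (hs : |s| < h) : ContDiffAt ℝ 2 (blowUpPair h) s :=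
  (contDiffAt_blowUpProfile (abs_lt.1 hs).2).add
    ((contDiffAt_blowUpProfile (neg_lt.1 (abs_lt.1 hs).1)).comp s contDiffAt_id.neg)

theorem iteratedDeriv_two_blowUpPair_le {h s : ℝ} (hs : |s| < h) :
    iteratedDeriv 2 (blowUpPair h) s ≤ blowUpPair h s ^ 3 := by
  have h₁ := (abs_lt.1 hs).2
  have h₂ := neg_lt.1 (abs_lt.1 hs).1
  have h₂' : ContDiffAt ℝ 2 (fun r => blowUpProfile h (-r)) s :=
    (contDiffAt_blowUpProfile h₂).comp s contDiffAt_id.neg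
  rw [show blowUpPair h = fun r => blowUpProfile h r + blowUpProfile h (-r) from rfl,
    iteratedDeriv_fun_add (contDiffAt_blowUpProfile h₁) h₂',
    iteratedDeriv_comp_neg, iteratedDeriv_two_blowUpProfile h₁, iteratedDeriv_two_blowUpProfile h₂]
  simpa using pow_add_pow_le (blowUpProfile_pos h₁).le (blowUpProfile_pos h₂).le three_ne_zero

theorem div_le_blowUpPair {h s δ : ℝ} (hs : |s| < h) (hδs : h - δ ≤ |s|) :
    √2 / δ ≤ blowUpPair h s := by
  have h₁ := blowUpProfile_pos (abs_lt.1 hs).2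
  have h₂ := blowUpProfile_pos (neg_lt.1 (abs_lt.1 hs).1)
  rcases le_total 0 s with hs0 | hs0
  · rw [abs_of_nonneg hs0] at hs hδs
    have : √2 / δ ≤ blowUpProfile h s :=
      div_le_div_of_nonneg_left (by positivity) (by linarith) (by linarith)
    exact this.trans (le_add_of_nonneg_right h₂.le)
  · rw [abs_of_nonpos hs0] at hs hδs
    have : √2 / δ ≤ blowUpProfile h (-s) :=
      div_le_div_of_nonneg_left (by positivity) (by linarith) (by linarith)
    exact this.trans (le_add_of_nonneg_left h₁.le)

variable {ι : Type*} [Fintype ι]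

noncomputable def cubeBarrier (h : ℝ) (z x : EuclideanSpace ℝ ι) : ℝ :=
  1 + ∑ i, blowUpPair h (x i - z i)

theorem cubeBarrier_self (h : ℝ) (z : EuclideanSpace ℝ ι) :
    cubeBarrier h z z = 1 + Fintype.card ι * (2 * √2 / h) := by
  simp [cubeBarrier, blowUpPair_zero]

theorem one_le_cubeBarrier {h : ℝ} {z x : EuclideanSpace ℝ ι} (hx : x ∈ openCube z h) :
    1 ≤ cubeBarrier h z x :=
  le_add_of_nonneg_right (Finset.sum_nonneg fun i _ => (blowUpPair_pos (hx i)).le)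

theorem one_add_div_le_cubeBarrier {h δ : ℝ} {z x : EuclideanSpace ℝ ι} (hx : x ∈ openCube z h)
    {i : ι} (hi : h - δ ≤ |x i - z i|) :
    1 + √2 / δ ≤ cubeBarrier h z x :=
  (add_le_add_iff_left 1).2 ((div_le_blowUpPair (hx i) hi).trans (Finset.single_le_sum
    (fun j _ => (blowUpPair_pos (hx j)).le) (Finset.mem_univ i)))

theorem contDiffAt_cubeBarrier {h : ℝ} {z x : EuclideanSpace ℝ ι} (hx : x ∈ openCube z h) :
    ContDiffAt ℝ 2 (cubeBarrier h z) x :=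
  contDiffAt_const.add (contDiffAt_sum_comp_apply (G := fun i s => blowUpPair h (s - z i))
    fun i => (contDiffAt_blowUpPair (hx i)).comp (x i) (contDiffAt_id.sub contDiffAt_const))

theorem euclLaplacian_cubeBarrier_le {n : ℕ} {h : ℝ} {z x : EuclideanSpace ℝ (Fin n)}
    (hx : x ∈ openCube z h) :
    euclLaplacian (cubeBarrier h z) x ≤ cubeBarrier h z x ^ 3 - cubeBarrier h z x := by
  have hG : ∀ i, ContDiffAt ℝ 2 (fun s => blowUpPair h (s - z i)) (x i) := fun i =>
    (contDiffAt_blowUpPair (hx i)).comp (x i) (contDiffAt_id.sub contDiffAt_const)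
  have hS : 0 ≤ ∑ i, blowUpPair h (x i - z i) :=
    Finset.sum_nonneg fun i _ => (blowUpPair_pos (hx i)).le
  calc euclLaplacian (cubeBarrier h z) x
      = ∑ i, iteratedDeriv 2 (blowUpPair h) (x i - z i) := by
        rw [show cubeBarrier h z = fun y => 1 + ∑ i, blowUpPair h (y i - z i) from rfl,
          euclLaplacian_const_add, euclLaplacian_sum_comp_apply hG]
        simp only [iteratedDeriv_comp_sub_const]
    _ ≤ ∑ i, blowUpPair h (x i - z i) ^ 3 :=
        Finset.sum_le_sum fun i _ => iteratedDeriv_two_blowUpPair_le (hx i)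
    _ ≤ (∑ i, blowUpPair h (x i - z i)) ^ 3 :=
        Finset.sum_pow_le_pow_sum _ (fun i _ => (blowUpPair_pos (hx i)).le) three_ne_zero
    _ ≤ cubeBarrier h z x ^ 3 - cubeBarrier h z x := by
        rw [cubeBarrier]
        nlinarith [pow_nonneg hS 2]

end UpperBarrier

section UpperBound

theorem exists_isLocalMax_sub_cubeBarrier {ι : Type*} [Fintype ι] {v : EuclideanSpace ℝ ι → ℝ}
    {h : ℝ} (hh : 0 < h) (z : EuclideanSpace ℝ ι) (hv : ContinuousOn v (closedCube z h)) :
    ∃ x₀ ∈ openCube z h, IsLocalMax (fun y => v y - cubeBarrier h z y) x₀ ∧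
      v z - cubeBarrier h z z ≤ v x₀ - cubeBarrier h z x₀ := by
  obtain ⟨M, hM⟩ := (isCompact_closedCube z h).bddAbove_image hv
  have hvM : ∀ y ∈ closedCube z h, v y ≤ M := fun y hy => hM ⟨y, hy, rfl⟩
  have hzC := self_mem_closedCube z hh.le
  set c := M - v z + cubeBarrier h z z
  have hc : 0 < c := by linarith [hvM z hzC, one_le_cubeBarrier (self_mem_openCube z hh)]
  -- outside the inner cube of half-side `h - δ` the barrier exceeds `1 + c`
  set δ := min (h / 2) (√2 / c)
  have hδ : 0 < δ := by positivity
  have hδh : δ < h := (min_le_left _ _).trans_lt (by linarith)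
  have hcδ : c ≤ √2 / δ := (le_div_comm₀ hδ hc).1 (min_le_right _ _)
  have hK : closedCube z (h - δ) ⊆ openCube z h := closedCube_subset_openCube z (by linarith)
  have hKC := hK.trans (openCube_subset_closedCube z h)
  have hcont : ContinuousOn (fun y => v y - cubeBarrier h z y) (closedCube z (h - δ)) :=
    (hv.mono hKC).sub fun y hy => (contDiffAt_cubeBarrier (hK hy)).continuousAt.continuousWithinAt
  have hbdry : ∀ y ∈ closedCube z (h - δ) \ openCube z (h - δ),
      v y - cubeBarrier h z y < v z - cubeBarrier h z z := by
    rintro y ⟨hyK, hyU⟩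
    obtain ⟨i, hi⟩ : ∃ i, h - δ ≤ |y i - z i| := by simpa [openCube] using hyU
    linarith [one_add_div_le_cubeBarrier (hK hyK) hi, hvM y (hKC hyK)]
  have hzK := self_mem_closedCube z (sub_pos.2 hδh).le
  obtain ⟨x₀, hx₀, hmax⟩ :=
    (isCompact_closedCube z (h - δ)).exists_isMaxOn_mem_subset hcont hzK hbdry
  exact ⟨x₀, hK (openCube_subset_closedCube z _ hx₀), hmax.isLocalMax
    (Filter.mem_of_superset ((isOpen_openCube z _).mem_nhds hx₀) (openCube_subset_closedCube z _)),
    hmax hzK⟩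

variable {n : ℕ}

namespace AllenCahn

theorem le_of_isLocalMax_sub {v ψ : EuclideanSpace ℝ (Fin n) → ℝ}
    {x : EuclideanSpace ℝ (Fin n)} (hv : ContDiffAt ℝ 2 v x) (hψ : ContDiffAt ℝ 2 ψ x)
    (hvΔ : euclLaplacian v x + v x - v x ^ 3 = 0) (hψΔ : euclLaplacian ψ x ≤ ψ x ^ 3 - ψ x)
    (hψ1 : 1 ≤ ψ x) (hmax : IsLocalMax (fun y => v y - ψ y) x) : v x ≤ ψ x := by
  have hΔ := euclLaplacian_le_of_isLocalMax_sub hv hψ hmax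
  by_contra! hlt
  -- `s ↦ s³ - s` is strictly increasing on `[1, ∞)`
  nlinarith [mul_pos (sub_pos.2 hlt) (by nlinarith : 0 < v x ^ 2 + v x * ψ x + ψ x ^ 2 - 1)]

variable {v : EuclideanSpace ℝ (Fin n) → ℝ}

theorem le_cubeBarrier (hv : ContDiff ℝ 2 v) (heq : ∀ x, euclLaplacian v x + v x - v x ^ 3 = 0)
    {h : ℝ} (hh : 0 < h) (z : EuclideanSpace ℝ (Fin n)) : v z ≤ cubeBarrier h z z := by
  obtain ⟨x₀, hx₀, hmax, hz⟩ := exists_isLocalMax_sub_cubeBarrier hh z hv.continuous.continuousOn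
  have := le_of_isLocalMax_sub hv.contDiffAt (contDiffAt_cubeBarrier hx₀)
    (heq x₀) (euclLaplacian_cubeBarrier_le hx₀) (one_le_cubeBarrier hx₀) hmax
  linarith

theorem le_one (hv : ContDiff ℝ 2 v) (heq : ∀ x, euclLaplacian v x + v x - v x ^ 3 = 0)
    (z : EuclideanSpace ℝ (Fin n)) : v z ≤ 1 := by
  have hlim : Tendsto (fun h : ℝ => cubeBarrier h z z) atTop (𝓝 1) := by
    simp only [cubeBarrier_self]
    simpa using (tendsto_const_nhds (x := (1 : ℝ))).add ((tendsto_const_nhds (x := (n : ℝ))).mul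
      ((tendsto_const_nhds (x := 2 * √2)).div_atTop tendsto_id))
  exact ge_of_tendsto hlim ((eventually_gt_atTop 0).mono fun h hh => le_cubeBarrier hv heq hh z)

end AllenCahn

end UpperBound

section LowerBarrier

theorem iteratedDeriv_two_cos_mul_sub (a c s : ℝ) :
    iteratedDeriv 2 (fun s => cos (a * (s - c))) s = -a ^ 2 * cos (a * (s - c)) := by
  rw [iteratedDeriv_comp_sub_const 2 (fun u => cos (a * u)),
    iteratedDeriv_comp_const_mul contDiff_cos, iteratedDeriv_even_cos 1]
  simp

variable {ι : Type*}

noncomputable def cosineBump [Fintype ι] (a : ℝ) (z x : EuclideanSpace ℝ ι) : ℝ :=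
  ∏ i, cos (a * (x i - z i))

theorem cosineBump_self [Fintype ι] (a : ℝ) (z : EuclideanSpace ℝ ι) : cosineBump a z z = 1 := by
  simp [cosineBump]

theorem contDiff_cosineBump [Fintype ι] (a : ℝ) (z : EuclideanSpace ℝ ι) :
    ContDiff ℝ 2 (cosineBump a z) := by
  unfold cosineBump
  fun_prop

theorem abs_mul_sub_le_of_mem_closedCube {a : ℝ} (ha : 0 < a) {z x : EuclideanSpace ℝ ι}
    (hx : x ∈ closedCube z (π / (2 * a))) (i : ι) : |a * (x i - z i)| ≤ π / 2 := by
  rw [abs_mul, abs_of_pos ha]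
  calc a * |x i - z i| ≤ a * (π / (2 * a)) := by gcongr; exact hx i
    _ = π / 2 := by field_simp

theorem cos_mul_sub_nonneg_of_mem_closedCube {a : ℝ} (ha : 0 < a) {z x : EuclideanSpace ℝ ι}
    (hx : x ∈ closedCube z (π / (2 * a))) (i : ι) : 0 ≤ cos (a * (x i - z i)) :=
  have hi := abs_le.1 (abs_mul_sub_le_of_mem_closedCube ha hx i)
  cos_nonneg_of_neg_pi_div_two_le_of_le hi.1 hi.2

theorem cosineBump_le_one [Fintype ι] {a : ℝ} (ha : 0 < a) {z x : EuclideanSpace ℝ ι}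
    (hx : x ∈ closedCube z (π / (2 * a))) : cosineBump a z x ≤ 1 :=
  Finset.prod_le_one (fun i _ => cos_mul_sub_nonneg_of_mem_closedCube ha hx i)
    fun _ _ => cos_le_one _

theorem cosineBump_eq_zero [Fintype ι] {a : ℝ} (ha : 0 < a) {z x : EuclideanSpace ℝ ι}
    (hx : x ∈ closedCube z (π / (2 * a)) \ openCube z (π / (2 * a))) : cosineBump a z x = 0 := by
  obtain ⟨i, hi⟩ : ∃ i, π / (2 * a) ≤ |x i - z i| := by simpa [openCube] using hx.2
  have hπ : |a * (x i - z i)| = π / 2 := by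
    refine le_antisymm (abs_mul_sub_le_of_mem_closedCube ha hx.1 i) ?_
    rw [abs_mul, abs_of_pos ha]
    calc π / 2 = a * (π / (2 * a)) := by field_simp
      _ ≤ a * |x i - z i| := by gcongr
  refine Finset.prod_eq_zero (Finset.mem_univ i) ?_
  rcases abs_eq (by positivity) |>.1 hπ with h | h <;> simp [h]

theorem euclLaplacian_cosineBump {n : ℕ} (a : ℝ) (z x : EuclideanSpace ℝ (Fin n)) :
    euclLaplacian (cosineBump a z) x = -(n * a ^ 2) * cosineBump a z x := by
  have hG : ∀ i, ContDiffAt ℝ 2 (fun s => cos (a * (s - z i))) (x i) := fun i => by fun_prop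
  rw [show cosineBump a z = fun y => ∏ i, cos (a * (y i - z i)) from rfl,
    euclLaplacian_prod_comp_apply hG]
  calc ∑ i, iteratedDeriv 2 (fun s => cos (a * (s - z i))) (x i) *
        ∏ j ∈ Finset.univ \ {i}, cos (a * (x j - z j))
      = ∑ _i : Fin n, -a ^ 2 * cosineBump a z x := by
        refine Finset.sum_congr rfl fun i _ => ?_
        rw [iteratedDeriv_two_cos_mul_sub, mul_assoc, cosineBump,
          Finset.prod_eq_mul_prod_sdiff_singleton_of_mem (Finset.mem_univ i)]
    _ = -(n * a ^ 2) * cosineBump a z x := by simp; ring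

end LowerBarrier

section LowerBound

theorem exists_isMaxOn_cosineBump_div {ι : Type*} [Fintype ι] {v : EuclideanSpace ℝ ι → ℝ}
    {a : ℝ} (ha : 0 < a) (z : EuclideanSpace ℝ ι)
    (hv : ContinuousOn v (closedCube z (π / (2 * a))))
    (hpos : ∀ x ∈ closedCube z (π / (2 * a)), 0 < v x) :
    ∃ x₀ ∈ openCube z (π / (2 * a)),
      IsMaxOn (fun x => cosineBump a z x / v x) (closedCube z (π / (2 * a))) x₀ := by
  have hzC := self_mem_closedCube z (by positivity : 0 ≤ π / (2 * a))
  refine (isCompact_closedCube z _).exists_isMaxOn_mem_subset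
    ((contDiff_cosineBump a z).continuous.continuousOn.div hv fun x hx => (hpos x hx).ne') hzC
    fun x hx => ?_
  rw [cosineBump_eq_zero ha hx, zero_div, cosineBump_self]
  exact one_div_pos.2 (hpos z hzC)

variable {n : ℕ}

namespace AllenCahn

theorem one_sub_le_sq_of_isLocalMax_sub {v φ : EuclideanSpace ℝ (Fin n) → ℝ}
    {x : EuclideanSpace ℝ (Fin n)} {T l : ℝ} (hv : ContDiffAt ℝ 2 v x) (hφ : ContDiffAt ℝ 2 φ x)
    (hvΔ : euclLaplacian v x + v x - v x ^ 3 = 0) (hφΔ : -l * φ x ≤ euclLaplacian φ x)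
    (hT : 0 < T) (hvx : 0 < v x) (hφx : φ x = T * v x)
    (hmax : IsLocalMax (fun y => φ y - T * v y) x) : 1 - l ≤ v x ^ 2 := by
  have hΔ := euclLaplacian_le_of_isLocalMax_sub hφ (contDiffAt_const.mul hv) hmax
  rw [euclLaplacian_const_mul hv] at hΔ
  rw [hφx] at hφΔ
  by_contra! hlt
  nlinarith [mul_pos (mul_pos hT hvx) (sub_pos.2 hlt)]

variable {v : EuclideanSpace ℝ (Fin n) → ℝ}

theorem one_sub_le_sq (hv : ContDiff ℝ 2 v) (hpos : ∀ x, 0 < v x)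
    (heq : ∀ x, euclLaplacian v x + v x - v x ^ 3 = 0) {a : ℝ} (ha : 0 < a)
    (z : EuclideanSpace ℝ (Fin n)) : 1 - n * a ^ 2 ≤ v z ^ 2 := by
  obtain ⟨x₀, hx₀, hmax⟩ :=
    exists_isMaxOn_cosineBump_div ha z hv.continuous.continuousOn fun x _ => hpos x
  set T := cosineBump a z x₀ / v x₀
  have hzC := self_mem_closedCube z (by positivity : 0 ≤ π / (2 * a))
  have hTz : 1 / v z ≤ T := by simpa [cosineBump_self] using hmax hzC
  have hT : 0 < T := (one_div_pos.2 (hpos z)).trans_le hTz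
  have hφx₀ : cosineBump a z x₀ = T * v x₀ := (div_mul_cancel₀ _ (hpos x₀).ne').symm
  have hloc : IsLocalMax (fun y => cosineBump a z y - T * v y) x₀ := by
    filter_upwards [(isOpen_openCube z _).mem_nhds hx₀] with y hy
    have := (div_le_iff₀ (hpos y)).1 (hmax (openCube_subset_closedCube z _ hy))
    linarith
  have hsq := one_sub_le_sq_of_isLocalMax_sub hv.contDiffAt
    (contDiff_cosineBump a z).contDiffAt (heq x₀) (euclLaplacian_cosineBump a z x₀).ge hT
    (hpos x₀) hφx₀ hloc
  -- `T v(x₀) = φ(x₀) ≤ 1 = φ(z) ≤ T v(z)`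
  have hle : v x₀ ≤ v z := by
    refine le_of_mul_le_mul_left ?_ hT
    rw [← hφx₀]
    exact (cosineBump_le_one ha (openCube_subset_closedCube z _ hx₀)).trans
      ((div_le_iff₀ (hpos z)).1 hTz)
  nlinarith [hpos x₀]

theorem one_le (hv : ContDiff ℝ 2 v) (hpos : ∀ x, 0 < v x)
    (heq : ∀ x, euclLaplacian v x + v x - v x ^ 3 = 0) (z : EuclideanSpace ℝ (Fin n)) :
    1 ≤ v z := by
  have hlim : Tendsto (fun a : ℝ => 1 - n * a ^ 2) (𝓝[>] 0) (𝓝 1) :=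
    ((by fun_prop : Continuous fun a : ℝ => 1 - n * a ^ 2).tendsto' 0 1 (by simp)).mono_left
      nhdsWithin_le_nhds
  have hsq : 1 ≤ v z ^ 2 := le_of_tendsto hlim
    (eventually_mem_nhdsWithin.mono fun a ha => one_sub_le_sq hv hpos heq ha z)
  nlinarith [hpos z]

end AllenCahn

end LowerBound

theorem allen_cahn_euclidean_liouville_general
    (n : ℕ) (v : EuclideanSpace ℝ (Fin n) → ℝ)
    (hpos : ∀ x, 0 < v x) (hC2 : ContDiff ℝ 2 v)
    (heq : ∀ x, euclLaplacian v x + v x - (v x) ^ 3 = 0) :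
    ∀ x, v x = 1 :=
  fun x => le_antisymm (AllenCahn.le_one hC2 heq x) (AllenCahn.one_le hC2 hpos heq x)

/-- Liouville theorem for the Allen–Cahn equation `Δv + v - v³ = 0` in Euclidean
space `ℝⁿ`, `n ≥ 2`: every positive `C²` solution is identically `1`. -/
theorem allen_cahn_euclidean_liouville
    (n : ℕ) (hn : 2 ≤ n) (v : EuclideanSpace ℝ (Fin n) → ℝ)
    (hpos : ∀ x, 0 < v x) (hC2 : ContDiff ℝ 2 v)
    (heq : ∀ x, euclLaplacian v x + v x - (v x) ^ 3 = 0) :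
    ∀ x, v x = 1 :=
  allen_cahn_euclidean_liouville_general n v hpos hC2 heq
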